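/- Suppose each of n agents has a matroid rank valuation v_i on subsets of a finite set O of items. Let A be a utilitarian optimal allocation that is not leximin. Then there exists a utilitarian optimal allocation A' and indices i, j ∈ {1,…,n} with s(A)_j ≥ s(A)_i + 2 such that s(A') = s(A) + χ_i − χ_j, where χ_k denotes the k-th standard basis vector of ℤ^n. -/

import Mathlib

/-- An allocation: bundles are pairwise disjoint. -/
def IsAlloc {O : Type*} [DecidableEq O] {n : ℕ} (A : Fin n → Finset O) : Prop :=
  ∀ i j, i ≠ j → Disjoint (A i) (A j)

/-- Utilitarian social welfare. -/
def USW {O : Type*} {n : ℕ} (v : Fin n → Finset O → ℤ)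
    (A : Fin n → Finset O) : ℤ :=
  ∑ i, v i (A i)

/-- The vector of realized valuations, sorted in non-decreasing order. -/
def sVec {O : Type*} {n : ℕ} (v : Fin n → Finset O → ℤ)
    (A : Fin n → Finset O) : Fin n → ℤ :=
  (fun i => v i (A i)) ∘ Tuple.sort (fun i => v i (A i))

/-!
In a clean allocation every bundle is independent in its owner's matroid, so utilities are
bundle sizes, and every allocation can be cleaned without changing utilities. Let `B` be
lexicographically better than `A`, with utility vectors `w` and `u`, and let `i` be an agent of
least `u i` among those with `u i < w i`. Matroid augmentation yields an item of `B i` raising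
`i`'s utility; by optimality some agent `k` holds it, and moving it to `i` costs `k` exactly one
unit. Repeating from `k` strictly shrinks `∑ k, |B k \ A k|`, so this exchange path ends at an
agent `j` with `w j < u j`, giving an optimal allocation with utilities `u + χ i - χ j`. Counting
entries below a threshold shows `u i ≤ w j`. If `u i + 2 ≤ u j` the sorted vector also changes
by a transfer; if `u j = u i + 1` it is unchanged while the allocation moved closer to `B`, and
we start again.
-/

open Finset

section RankFunction

variable {O : Type*} [DecidableEq O] {f : Finset O → ℤ} {S T : Finset O}

def HasBinaryMarginals (f : Finset O → ℤ) : Prop :=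
  ∀ (S : Finset O) (o : O), o ∉ S → f (insert o S) - f S = 0 ∨ f (insert o S) - f S = 1

def HasDiminishingMarginals (f : Finset O → ℤ) : Prop :=
  ∀ (S T : Finset O), S ⊆ T → ∀ o ∉ T, f (insert o T) - f T ≤ f (insert o S) - f S

structure IsMatroidRank (f : Finset O → ℤ) : Prop where
  map_empty : f ∅ = 0
  binary : HasBinaryMarginals f
  diminishing : HasDiminishingMarginals f

namespace HasBinaryMarginals

variable (hf : HasBinaryMarginals f)
include hf

theorem le_insert (o : O) (S : Finset O) : f S ≤ f (insert o S) := by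
  by_cases ho : o ∈ S
  · rw [insert_eq_of_mem ho]
  · rcases hf S o ho with h | h <;> omega

theorem insert_le (o : O) (S : Finset O) : f (insert o S) ≤ f S + 1 := by
  by_cases ho : o ∈ S
  · rw [insert_eq_of_mem ho]; omega
  · rcases hf S o ho with h | h <;> omega

theorem le_union (S D : Finset O) : f S ≤ f (S ∪ D) := by
  induction D using Finset.induction_on with
  | empty => simp
  | insert o D _ ih => rw [union_insert]; exact ih.trans (hf.le_insert o _)

theorem union_le (S D : Finset O) : f (S ∪ D) ≤ f S + #D := by
  induction D using Finset.induction_on with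
  | empty => simp
  | insert o D ho ih =>
    rw [union_insert, card_insert_of_notMem ho]
    have := hf.insert_le o (S ∪ D)
    push_cast
    omega

theorem monotone : Monotone f := fun S T h => by
  simpa [union_sdiff_of_subset h] using hf.le_union S (T \ S)

theorem le_card (h0 : f ∅ = 0) (S : Finset O) : f S ≤ #S := by
  simpa [h0] using hf.union_le ∅ S

theorem eq_card_of_subset (h0 : f ∅ = 0) (hST : S ⊆ T) (hT : f T = #T) : f S = #S := by
  have h := hf.union_le S (T \ S)
  rw [union_sdiff_of_subset hST, card_sdiff_of_subset hST, Nat.cast_sub (card_le_card hST)] at h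
  have := hf.le_card h0 S
  omega

end HasBinaryMarginals

namespace HasDiminishingMarginals

variable (hs : HasDiminishingMarginals f) (hb : HasBinaryMarginals f)
include hs hb

theorem union_eq_of_forall_insert_eq {D : Finset O} (h : ∀ x ∈ D, f (insert x S) = f S) :
    f (S ∪ D) = f S := by
  induction D using Finset.induction_on with
  | empty => simp
  | insert o D _ ih =>
    have hD : f (S ∪ D) = f S := ih fun x hx => h x (mem_insert_of_mem hx)
    rw [union_insert]
    by_cases ho : o ∈ S ∪ D
    · rwa [insert_eq_of_mem ho]
    · have := hs S (S ∪ D) subset_union_left o ho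
      have := hb.le_insert o (S ∪ D)
      have := h o (mem_insert_self o D)
      omega

theorem exists_insert_of_card_lt (hS : f S = #S) (hT : f T = #T) (hlt : #S < #T) :
    ∃ x ∈ T, x ∉ S ∧ f (insert x S) = f S + 1 := by
  by_contra! h
  have hspan : f (S ∪ T) = f S := hs.union_eq_of_forall_insert_eq hb fun x hx => by
    by_cases hxS : x ∈ S
    · rw [insert_eq_of_mem hxS]
    · have := h x hx hxS
      rcases hb S x hxS with h' | h' <;> omega
  have := hb.monotone (subset_union_right : T ⊆ S ∪ T)
  omega

end HasDiminishingMarginals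

theorem IsMatroidRank.exists_subset_eq_card (hf : IsMatroidRank f) (S : Finset O) :
    ∃ S' ⊆ S, f S' = #S' ∧ f S' = f S := by
  induction S using Finset.induction_on with
  | empty => exact ⟨∅, subset_rfl, by simp [hf.map_empty]⟩
  | insert o S ho ih =>
    obtain ⟨S', hS'S, hS'card, hS'val⟩ := ih
    rcases hf.binary S o ho with h | h
    · exact ⟨S', hS'S.trans (subset_insert o S), hS'card, by omega⟩
    · have hoS' : o ∉ S' := fun h' => ho (hS'S h')
      have := hf.diminishing S' S hS'S o ho
      have := hf.binary.insert_le o S'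
      refine ⟨insert o S', insert_subset_insert o hS'S, ?_, by omega⟩
      rw [card_insert_of_notMem hoS']
      push_cast
      omega

end RankFunction

section SortedVectors

variable {n : ℕ}

def sorted {α : Type*} [LinearOrder α] (u : Fin n → α) : Fin n → α := u ∘ Tuple.sort u

theorem card_filter_sorted_le_eq (u : Fin n → ℤ) (r : ℤ) :
    #{k | sorted u k ≤ r} = #{k | u k ≤ r} :=
  card_equiv (Tuple.sort u) (by unfold sorted; simp)

theorem toLex_lt_of_card_filter_le {s t : Fin n → ℤ} (hs : Monotone s) (ht : Monotone t)
    {r₀ : ℤ} (hbelow : ∀ r < r₀, #{k | s k ≤ r} = #{k | t k ≤ r})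
    (hr₀ : #{k | t k ≤ r₀} < #{k | s k ≤ r₀}) : toLex s < toLex t := by
  have hn : #{k | t k ≤ r₀} < n := hr₀.trans_le ((card_filter_le _ _).trans_eq (card_fin n))
  have hsp := (Tuple.lt_card_le_iff_apply_le_of_monotone (j := ⟨_, hn⟩) hs).1 hr₀
  have htp := (Tuple.lt_card_le_iff_apply_le_of_monotone (j := ⟨_, hn⟩) (a := r₀) ht).not.1
    (lt_irrefl _)
  refine ⟨⟨_, hn⟩, fun q hq => ?_, hsp.trans_lt (not_le.1 htp)⟩
  have hsq : s q ≤ s ⟨_, hn⟩ := hs hq.le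
  have htq : t q ≤ r₀ := (Tuple.lt_card_le_iff_apply_le_of_monotone (a := r₀) ht).1 hq
  change s q = t q
  by_contra hne
  have hs' := Tuple.lt_card_le_iff_apply_le_of_monotone (j := q) (a := min (s q) (t q)) hs
  have ht' := Tuple.lt_card_le_iff_apply_le_of_monotone (j := q) (a := min (s q) (t q)) ht
  rw [hbelow (min (s q) (t q)) (by omega)] at hs'
  have hst := hs'.symm.trans ht'
  rcases lt_or_gt_of_ne hne with h | h
  · have := hst.1 (by omega)
    omega
  · have := hst.2 (by omega)
    omega

theorem monotone_sorted {α : Type*} [LinearOrder α] (u : Fin n → α) : Monotone (sorted u) :=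
  Tuple.monotone_sort u

theorem le_of_toLex_sorted_lt {u w : Fin n → ℤ} (hlt : toLex (sorted u) < toLex (sorted w))
    {a : ℤ} (ha : ∀ k, u k < w k → a ≤ u k) {j : Fin n} (hj : w j < u j) : a ≤ w j := by
  by_contra! hja
  obtain ⟨k₀, hk₀, hmin⟩ :=
    exists_min_image {k | w k < u k ∧ w k < a} w ⟨j, by simp [hj, hja]⟩
  simp only [mem_filter, mem_univ, true_and, and_imp] at hk₀ hmin
  -- below `w k₀` the same agents have utility `≤ r` in `u` and `w`; at `w k₀`, `w` has more
  refine lt_asymm hlt (toLex_lt_of_card_filter_le (monotone_sorted w) (monotone_sorted u)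
    (r₀ := w k₀) (fun r hr => ?_) ?_) <;> simp only [card_filter_sorted_le_eq]
  · congr 1
    ext k
    simp only [mem_filter, mem_univ, true_and]
    constructor <;> intro hk
    · by_contra! hkr
      have := hmin k (by omega) (by omega)
      omega
    · by_cases huw : u k < w k
      · have := ha k huw
        omega
      · omega
  · refine card_lt_card (ssubset_iff_of_subset (fun k hk => ?_) |>.2 ⟨k₀, ?_⟩)
    · simp only [mem_filter, mem_univ, true_and] at hk ⊢
      by_cases huw : u k < w k
      · have := ha k huw
        omega
      · omega
    · simp only [mem_filter, mem_univ, true_and, not_le]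
      omega

theorem exists_lt_of_toLex_sorted_lt {u w : Fin n → ℤ}
    (hlt : toLex (sorted u) < toLex (sorted w)) : ∃ k, u k < w k := by
  by_contra! h
  have huw : u = w := funext fun k => by
    by_contra hne
    have := le_of_toLex_sorted_lt hlt (a := w k + 1) (fun k' hk' => absurd hk' (not_lt.2 (h k')))
      (lt_of_le_of_ne (h k) (Ne.symm hne))
    omega
  exact lt_irrefl _ (huw ▸ hlt)

theorem comp_swap_mul_eq {ι α : Type*} [DecidableEq ι] {u : ι → α} {x y : ι} (h : u x = u y)
    (σ : Equiv.Perm ι) : u ∘ ⇑(Equiv.swap x y * σ) = u ∘ σ := by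
  rw [Equiv.Perm.coe_mul, ← Function.comp_assoc, Equiv.comp_swap_eq_update, h,
    Function.update_eq_self, ← h, Function.update_eq_self]

theorem exists_perm_comp_eq_of_apply_eq {ι α : Type*} [DecidableEq ι] {u : ι → α}
    (σ : Equiv.Perm ι) {p q i j : ι} (hpq : p ≠ q) (hij : i ≠ j) (hi : u (σ p) = u i)
    (hj : u (σ q) = u j) :
    ∃ π : Equiv.Perm ι, u ∘ π = u ∘ σ ∧ π p = i ∧ π q = j := by
  set π₁ := Equiv.swap i (σ p) * σ
  have h₁ : u ∘ π₁ = u ∘ σ := comp_swap_mul_eq hi.symm σ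
  have hπ₁p : π₁ p = i := by simp [π₁]
  have hj' : u j = u (π₁ q) := by rw [← hj]; exact (congrFun h₁ q).symm
  refine ⟨Equiv.swap j (π₁ q) * π₁, (comp_swap_mul_eq hj' π₁).trans h₁, ?_, by simp⟩
  rw [Equiv.Perm.mul_apply, hπ₁p,
    Equiv.swap_apply_of_ne_of_ne hij (hπ₁p ▸ π₁.injective.ne hpq)]

theorem sorted_add_single_sub_single_of_eq_add_one {u : Fin n → ℤ} {i j : Fin n}
    (h : u j = u i + 1) : sorted (u + Pi.single i 1 - Pi.single j 1) = sorted u := by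
  have hij : i ≠ j := by rintro rfl; omega
  have hswap : u + Pi.single i 1 - Pi.single j 1 = u ∘ Equiv.swap i j := by
    funext k
    rcases eq_or_ne k i with rfl | hki
    · simp [hij, h]
    rcases eq_or_ne k j with rfl | hkj
    · simp [hij.symm, h]
    simp [hki, hkj, Equiv.swap_apply_of_ne_of_ne]
  rw [hswap]
  exact Tuple.comp_perm_comp_sort_eq_comp_sort

theorem sorted_add_single_sub_single {u : Fin n → ℤ} {i j : Fin n} (h : u i + 2 ≤ u j) :
    ∃ p q, sorted u p + 2 ≤ sorted u q ∧
      sorted (u + Pi.single i 1 - Pi.single j 1) = sorted u + Pi.single p 1 - Pi.single q 1 := by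
  set s := sorted u
  have hs : Monotone s := monotone_sorted u
  obtain ⟨p, hp, hpmax⟩ := exists_max_image {k | s k = u i} id
    ⟨(Tuple.sort u).symm i, by simp [s, sorted]⟩
  obtain ⟨q, hq, hqmin⟩ := exists_min_image {k | s k = u j} id
    ⟨(Tuple.sort u).symm j, by simp [s, sorted]⟩
  simp only [mem_filter, mem_univ, true_and, id] at hp hq hpmax hqmin
  have hpq : p ≠ q := by rintro rfl; omega
  have hp_lt : ∀ l, p < l → s p < s l := fun l hl =>
    lt_of_le_of_ne (hs hl.le) fun he => (hpmax l (he ▸ hp)).not_gt hl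
  have hq_lt : ∀ k, k < q → s k < s q := fun k hk =>
    lt_of_le_of_ne (hs hk.le) fun he => (hqmin k (he ▸ hq)).not_gt hk
  obtain ⟨π, hπ, hπp, hπq⟩ := exists_perm_comp_eq_of_apply_eq (Tuple.sort u) hpq
    (by rintro rfl; omega) hp hq
  set u' := u + Pi.single i 1 - Pi.single j 1
  have hu'π : u' ∘ π = s + Pi.single p 1 - Pi.single q 1 := by
    funext k
    have := congrFun hπ k
    simp only [Function.comp_apply] at this
    simp [u', s, sorted, this, Pi.single_apply, ← hπp, ← hπq, π.injective.eq_iff]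
  have hmono : Monotone (u' ∘ π) := by
    rw [hu'π]
    intro k l hkl
    rcases hkl.eq_or_lt with rfl | hkl
    · exact le_rfl
    have := hs hkl.le
    have := hp_lt l
    have := hq_lt k
    simp only [Pi.add_apply, Pi.sub_apply, Pi.single_apply]
    split_ifs <;> subst_vars <;> omega
  exact ⟨p, q, by omega, (Tuple.comp_sort_eq_comp_iff_monotone.2 hmono).symm.trans hu'π⟩

theorem sum_natAbs_sub_lt_of_transfer {u w : Fin n → ℤ} {i j : Fin n} (hi : u i < w i)
    (hj : w j < u j) :
    ∑ k, (w k - (u + Pi.single i 1 - Pi.single j 1 : Fin n → ℤ) k).natAbs <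
      ∑ k, (w k - u k).natAbs := by
  refine sum_lt_sum (fun k _ => ?_) ⟨i, mem_univ i, ?_⟩ <;>
    simp only [Pi.add_apply, Pi.sub_apply, Pi.single_apply] <;> split_ifs <;> subst_vars <;> omega

end SortedVectors

section Allocation

variable {O : Type*} {n : ℕ} {v : Fin n → Finset O → ℤ} {A B : Fin n → Finset O}

def utilities (v : Fin n → Finset O → ℤ) (A : Fin n → Finset O) : Fin n → ℤ :=
  fun k => v k (A k)

def IsClean (v : Fin n → Finset O → ℤ) (A : Fin n → Finset O) : Prop :=
  ∀ k, v k (A k) = #(A k)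

theorem USW_eq_sum_utilities : USW v A = ∑ k, utilities v A k := rfl

theorem sVec_eq_sorted_utilities : sVec v A = sorted (utilities v A) := rfl

theorem USW_eq_of_utilities_eq_add {i : Fin n}
    (h : utilities v B = utilities v A + Pi.single i 1) : USW v B = USW v A + 1 := by
  simp [USW_eq_sum_utilities, h, sum_add_distrib]

theorem USW_eq_of_utilities_eq_add_sub {i j : Fin n}
    (h : utilities v B = utilities v A + Pi.single i 1 - Pi.single j 1) : USW v B = USW v A := by
  simp [USW_eq_sum_utilities, h, sum_add_distrib, sum_sub_distrib]

variable [DecidableEq O]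

def IsUtilOpt (v : Fin n → Finset O → ℤ) (A : Fin n → Finset O) : Prop :=
  ∀ B, IsAlloc B → USW v B ≤ USW v A

theorem IsUtilOpt.of_USW_eq (hA : IsUtilOpt v A) (h : USW v B = USW v A) : IsUtilOpt v B :=
  fun D hD => h ▸ hA D hD

theorem IsAlloc.mono (hA : IsAlloc A) (h : ∀ k, B k ⊆ A k) : IsAlloc B :=
  fun a b hab => (hA a b hab).mono (h a) (h b)

theorem IsAlloc.exists_clean (hv : ∀ k, IsMatroidRank (v k)) (hA : IsAlloc A) :
    ∃ C, IsAlloc C ∧ IsClean v C ∧ utilities v C = utilities v A := by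
  choose C hCA hCc hCv using fun k => (hv k).exists_subset_eq_card (A k)
  exact ⟨C, hA.mono hCA, hCc, funext hCv⟩

def moveItem (A : Fin n → Finset O) (x : O) (j : Fin n) : Fin n → Finset O :=
  Function.update (fun k => (A k).erase x) j (insert x (A j))

variable {x : O} {j k : Fin n}

theorem moveItem_self : moveItem A x j j = insert x (A j) := Function.update_self ..

theorem moveItem_of_ne (h : k ≠ j) : moveItem A x j k = (A k).erase x :=
  Function.update_of_ne h ..

theorem IsAlloc.moveItem (hA : IsAlloc A) (x : O) (j : Fin n) : IsAlloc (moveItem A x j) := by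
  have key : ∀ k ≠ j, Disjoint (insert x (A j)) ((A k).erase x) := fun k hk =>
    disjoint_insert_left.2 ⟨notMem_erase x _, (hA j k hk.symm).mono_right (erase_subset x _)⟩
  intro a b hab
  rcases eq_or_ne a j with ha | ha <;> rcases eq_or_ne b j with hb | hb
  · exact absurd (ha.trans hb.symm) hab
  · rw [ha, moveItem_self, moveItem_of_ne hb]; exact key b hb
  · rw [hb, moveItem_self, moveItem_of_ne ha]; exact (key a ha).symm
  · rw [moveItem_of_ne ha, moveItem_of_ne hb]
    exact (hA a b hab).mono (erase_subset x _) (erase_subset x _)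

theorem sum_card_sdiff_moveItem_lt (hB : IsAlloc B) (hxB : x ∈ B j) (hxA : x ∉ A j) :
    ∑ k, #(B k \ moveItem A x j k) < ∑ k, #(B k \ A k) := by
  refine sum_lt_sum (fun k _ => card_le_card ?_) ⟨j, mem_univ j, card_lt_card ?_⟩
  · rcases eq_or_ne k j with rfl | hk
    · rw [moveItem_self]; exact sdiff_subset_sdiff subset_rfl (subset_insert x _)
    · have hxk : x ∉ B k := disjoint_left.1 (hB j k hk.symm) hxB
      intro y hy
      simp only [moveItem_of_ne hk, mem_sdiff, mem_erase, not_and] at hy ⊢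
      exact ⟨hy.1, fun hyA => hy.2 (fun hyx => hxk (hyx ▸ hy.1)) hyA⟩
  · rw [moveItem_self, ssubset_iff_of_subset (sdiff_subset_sdiff subset_rfl (subset_insert x _))]
    exact ⟨x, mem_sdiff.2 ⟨hxB, hxA⟩, by simp⟩

theorem utilities_moveItem_of_forall_notMem (hx : ∀ k, x ∉ A k)
    (hval : v j (insert x (A j)) = v j (A j) + 1) :
    utilities v (moveItem A x j) = utilities v A + Pi.single j 1 := by
  funext m
  rcases eq_or_ne m j with rfl | hm
  · simp [utilities, moveItem_self, hval]
  · simp [utilities, moveItem_of_ne hm, erase_eq_of_notMem (hx m), hm]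

theorem utilities_moveItem_of_mem (hA : IsAlloc A) (hxk : x ∈ A k) (hkj : k ≠ j)
    (hval_j : v j (insert x (A j)) = v j (A j) + 1)
    (hval_k : v k ((A k).erase x) = v k (A k) - 1) :
    utilities v (moveItem A x j) = utilities v A + Pi.single j 1 - Pi.single k 1 := by
  funext m
  rcases eq_or_ne m j with rfl | hmj
  · simp [utilities, moveItem_self, hval_j, hkj.symm]
  rcases eq_or_ne m k with rfl | hmk
  · simp [utilities, moveItem_of_ne hmj, hval_k, hmj]
  have hxm : x ∉ A m := disjoint_left.1 (hA k m hmk.symm) hxk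
  simp [utilities, moveItem_of_ne hmj, erase_eq_of_notMem hxm, hmj, hmk]

theorem IsClean.moveItem (hv : ∀ k, IsMatroidRank (v k)) (hA : IsClean v A) (hxj : x ∉ A j)
    (hval : v j (insert x (A j)) = v j (A j) + 1) : IsClean v (moveItem A x j) := by
  intro m
  rcases eq_or_ne m j with rfl | hm
  · rw [moveItem_self, hval, hA m, card_insert_of_notMem hxj, Nat.cast_succ]
  · rw [moveItem_of_ne hm]
    exact (hv m).binary.eq_card_of_subset (hv m).map_empty (erase_subset x _) (hA m)

theorem exists_clean_transfer (hv : ∀ k, IsMatroidRank (v k)) (hB : IsAlloc B)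
    (hBc : IsClean v B) :
    ∀ C, IsAlloc C → IsClean v C → IsUtilOpt v C → ∀ j, v j (C j) < v j (B j) →
      ∃ k C', v k (B k) < v k (C k) ∧ IsAlloc C' ∧ IsClean v C' ∧
        utilities v C' = utilities v C + Pi.single j 1 - Pi.single k 1 := by
  intro C
  induction hd : ∑ m, #(B m \ C m) using Nat.strong_induction_on generalizing C with
  | _ d ih =>
  intro hC hCc hCopt j hj
  obtain ⟨x, hxB, hxC, hx⟩ := (hv j).diminishing.exists_insert_of_card_lt (hv j).binary
    (hCc j) (hBc j) (by have := hCc j; have := hBc j; omega)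
  have hD : IsAlloc (moveItem C x j) := hC.moveItem x j
  have hDc : IsClean v (moveItem C x j) := hCc.moveItem hv hxC hx
  obtain ⟨k, hxk⟩ : ∃ k, x ∈ C k := by
    -- otherwise handing `x` to `j` would raise the welfare
    by_contra! hfree
    have := hCopt _ hD
    rw [USW_eq_of_utilities_eq_add (utilities_moveItem_of_forall_notMem hfree hx)] at this
    omega
  have hkj : k ≠ j := by rintro rfl; exact hxC hxk
  have hDk : v k ((C k).erase x) = v k (C k) - 1 := by
    rw [← moveItem_of_ne hkj, hDc k, hCc k, moveItem_of_ne hkj, card_erase_of_mem hxk,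
      Nat.cast_pred (card_pos.2 ⟨x, hxk⟩)]
  have hDu := utilities_moveItem_of_mem hC hxk hkj hx hDk
  by_cases hk : v k (B k) < v k (C k)
  · exact ⟨k, _, hk, hD, hDc, hDu⟩
  obtain ⟨k', C', hk', hC', hC'c, hC'u⟩ :=
    ih _ (hd ▸ sum_card_sdiff_moveItem_lt hB hxB hxC) _ rfl hD hDc
      (hCopt.of_USW_eq (USW_eq_of_utilities_eq_add_sub hDu)) k
      (by rw [moveItem_of_ne hkj, hDk]; omega)
  refine ⟨k', C', ?_, hC', hC'c, by rw [hC'u, hDu]; abel⟩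
  have hDk' := congrFun hDu k'
  -- `k' ≠ j` as `j` now has at most its `B`-utility, `k' ≠ k` as `k` has less than its own
  simp only [utilities, Pi.add_apply, Pi.sub_apply, Pi.single_apply] at hDk'
  split_ifs at hDk' <;> subst_vars <;> omega

end Allocation

section Transfer

variable {O : Type*} [DecidableEq O] {n : ℕ} {v : Fin n → Finset O → ℤ}
  {A B : Fin n → Finset O}

theorem exists_transfer_toward (hv : ∀ k, IsMatroidRank (v k)) (hA : IsAlloc A)
    (hopt : IsUtilOpt v A) (hB : IsAlloc B) (hlt : toLex (sVec v A) < toLex (sVec v B)) :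
    ∃ A' i j, IsAlloc A' ∧ IsUtilOpt v A' ∧
      utilities v A' = utilities v A + Pi.single i 1 - Pi.single j 1 ∧
      v i (A i) < v i (B i) ∧ v j (B j) < v j (A j) ∧ v i (A i) ≤ v j (B j) := by
  obtain ⟨i, hi, hmin⟩ := exists_min_image {k | v k (A k) < v k (B k)} (fun k => v k (A k))
    (by simpa [Finset.Nonempty] using exists_lt_of_toLex_sorted_lt hlt)
  simp only [mem_filter, mem_univ, true_and] at hi hmin
  obtain ⟨C, hC, hCc, hCu⟩ := hA.exists_clean hv
  obtain ⟨D, hD, hDc, hDu⟩ := hB.exists_clean hv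
  have hCval : ∀ k, v k (C k) = v k (A k) := congrFun hCu
  have hDval : ∀ k, v k (D k) = v k (B k) := congrFun hDu
  have hCopt : IsUtilOpt v C := hopt.of_USW_eq (by rw [USW_eq_sum_utilities, hCu]; rfl)
  obtain ⟨j, A', hj, hA', -, hA'u⟩ := exists_clean_transfer hv hD hDc C hC hCc hCopt i
    (by rwa [hCval, hDval])
  rw [hCu] at hA'u
  rw [hCval, hDval] at hj
  exact ⟨A', i, j, hA', hopt.of_USW_eq (USW_eq_of_utilities_eq_add_sub hA'u), hA'u, hi, hj,
    le_of_toLex_sorted_lt hlt hmin hj⟩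

theorem exists_sorted_transfer (hv : ∀ k, IsMatroidRank (v k)) (hB : IsAlloc B) :
    ∀ A, IsAlloc A → IsUtilOpt v A → toLex (sVec v A) < toLex (sVec v B) →
      ∃ A', IsAlloc A' ∧ IsUtilOpt v A' ∧ ∃ i j, sVec v A i + 2 ≤ sVec v A j ∧
        sVec v A' = sVec v A + Pi.single i 1 - Pi.single j 1 := by
  intro A
  induction hd : ∑ k, (v k (B k) - v k (A k)).natAbs using Nat.strong_induction_on
    generalizing A with
  | _ d ih =>
  intro hA hopt hlt
  obtain ⟨A', i, j, hA', hA'opt, hA'u, hi, hj, hij⟩ := exists_transfer_toward hv hA hopt hB hlt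
  by_cases hgap : v i (A i) + 2 ≤ v j (A j)
  · obtain ⟨p, q, hpq, hs⟩ := sorted_add_single_sub_single (u := utilities v A) hgap
    exact ⟨A', hA', hA'opt, p, q, hpq, by rw [sVec_eq_sorted_utilities, hA'u, hs]; rfl⟩
  have hsame : sVec v A' = sVec v A := by
    rw [sVec_eq_sorted_utilities, hA'u]
    exact sorted_add_single_sub_single_of_eq_add_one (by simp only [utilities]; omega)
  have hdist : ∑ k, (v k (B k) - v k (A' k)).natAbs < d := by
    have := sum_natAbs_sub_lt_of_transfer (u := utilities v A) (w := utilities v B) hi hj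
    rw [← hd]
    rwa [← hA'u] at this
  obtain ⟨A'', hA'', hA''opt, p, q, hpq, hs⟩ := ih _ hdist A' rfl hA' hA'opt (hsame ▸ hlt)
  exact ⟨A'', hA'', hA''opt, p, q, hsame ▸ hpq, hsame ▸ hs⟩

end Transfer

theorem utilOpt_not_leximin_transfer_general
    {O : Type*} [DecidableEq O] {n : ℕ}
    (v : Fin n → Finset O → ℤ)
    (h0 : ∀ i, v i ∅ = 0)
    (hbin : ∀ i (S : Finset O) (o : O), o ∉ S →
      v i (insert o S) - v i S = 0 ∨ v i (insert o S) - v i S = 1)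
    (hsub : ∀ i (S T : Finset O), S ⊆ T → ∀ o ∉ T,
      v i (insert o T) - v i T ≤ v i (insert o S) - v i S)
    (A : Fin n → Finset O)
    (hA : IsAlloc A)
    (hopt : ∀ B : Fin n → Finset O, IsAlloc B → USW v B ≤ USW v A)
    (hnotlex : ¬ ∀ B : Fin n → Finset O, IsAlloc B →
      toLex (sVec v B) ≤ toLex (sVec v A)) :
    ∃ A' : Fin n → Finset O, IsAlloc A' ∧
      (∀ B : Fin n → Finset O, IsAlloc B → USW v B ≤ USW v A') ∧
      ∃ i j : Fin n, sVec v A i + 2 ≤ sVec v A j ∧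
        sVec v A' = fun k =>
          sVec v A k + (if k = i then 1 else 0) - (if k = j then 1 else 0) := by
  simp only [not_forall, not_le] at hnotlex
  obtain ⟨B, hB, hlt⟩ := hnotlex
  obtain ⟨A', hA', hA'opt, i, j, hij, hs⟩ :=
    exists_sorted_transfer (fun k => ⟨h0 k, hbin k, hsub k⟩) hB A hA hopt hlt
  refine ⟨A', hA', hA'opt, i, j, hij, ?_⟩
  rw [hs]
  funext k
  simp [Pi.single_apply]

/-- For matroid rank valuations, if a utilitarian optimal
allocation `A` is not leximin, then there is another utilitarian optimal
allocation `A'` with `s(A') = s(A) + χ_i − χ_j` for indices `i, j` with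
`s(A)_j ≥ s(A)_i + 2`. -/
theorem utilOpt_not_leximin_transfer
    {O : Type*} [DecidableEq O] [Fintype O] {n : ℕ}
    (v : Fin n → Finset O → ℤ)
    (h0 : ∀ i, v i ∅ = 0)
    (hbin : ∀ i (S : Finset O) (o : O), o ∉ S →
      v i (insert o S) - v i S = 0 ∨ v i (insert o S) - v i S = 1)
    (hsub : ∀ i (S T : Finset O), S ⊆ T → ∀ o ∉ T,
      v i (insert o T) - v i T ≤ v i (insert o S) - v i S)
    (A : Fin n → Finset O)
    (hA : IsAlloc A)
    (hopt : ∀ B : Fin n → Finset O, IsAlloc B → USW v B ≤ USW v A)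
    (hnotlex : ¬ ∀ B : Fin n → Finset O, IsAlloc B →
      toLex (sVec v B) ≤ toLex (sVec v A)) :
    ∃ A' : Fin n → Finset O, IsAlloc A' ∧
      (∀ B : Fin n → Finset O, IsAlloc B → USW v B ≤ USW v A') ∧
      ∃ i j : Fin n, sVec v A i + 2 ≤ sVec v A j ∧
        sVec v A' = fun k =>
          sVec v A k + (if k = i then 1 else 0) - (if k = j then 1 else 0) :=
  utilOpt_not_leximin_transfer_general v h0 hbin hsub A hA hopt hnotlex
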